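/- arXiv:2006.03545 — 2 statements merged into one kernel-verified Lean document; each statement's English description precedes it below -/
import Mathlib

section
/- (Lemma 2, explicit form.) Let K ≥ 2 and d ≥ 1 be natural numbers, γ ∈ (0,1), ŷ, y ∈ Fin K, and x : Fin d → ℝ. Let P(r) := (1−γ)·I[r = ŷ] + γ/K for r ∈ Fin K, let ρ0, ρ1 ≥ 0 with ρ0 + ρ1 < 1, β := 1 − ρ0 − ρ1, h0 := −ρ0/β, h1 := (1−ρ0)/β, and for i ∈ Fin K let q(i) := (1−ρ1) if i = y and q(i) := ρ0 otherwise. Then for every r ∈ Fin K and j ∈ Fin d, the expected update entry Σ_{i ∈ Fin K} P(i) · x_j · ( (q(i)·h1 + (1−q(i))·h0) · I[i = r] / P(r) − I[ŷ = r] ) equals x_j · ( I[y = r] − I[ŷ = r] ), i.e. the update matrix H used by RCNBF is, in expectation over the drawn label ỹ and the noisy feedback f_ρ, equal to the multiclass Perceptron update matrix U with U_{r,j} = x_j·(I[y = r] − I[ŷ = r]). -/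
/-!
Given the drawn label `i`, the estimator `h` of the noisy feedback has conditional mean
`(q i - ρ0) / β`, which is exactly the true feedback `I[i = y]`; this is why `h0, h1` are chosen
as they are. Averaging over `i ∼ P`, the factor `I[i = r] / P r` is an importance weight that picks
out the `r`-th term, while the baseline `I[ŷ = r]` is averaged against a probability vector.
-/

open Finset

lemma noisy_feedback_estimator_expectation {ρ0 ρ1 : ℝ} (hβ : 1 - ρ0 - ρ1 ≠ 0)
    (p : Prop) [Decidable p] :
    (if p then 1 - ρ1 else ρ0) * ((1 - ρ0) / (1 - ρ0 - ρ1))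
        + (1 - if p then 1 - ρ1 else ρ0) * (-ρ0 / (1 - ρ0 - ρ1))
      = if p then 1 else 0 := by
  split_ifs <;> field_simp <;> ring

lemma sum_mul_importance_weighted_sub {ι : Type*} [Fintype ι] [DecidableEq ι]
    {P : ι → ℝ} (hP : ∑ i, P i = 1) {r : ι} (hr : P r ≠ 0) (g : ι → ℝ) (c a : ℝ) :
    ∑ i, P i * (c * (g i * (if i = r then 1 else 0) / P r - a)) = c * (g r - a) := by
  have hsplit : ∀ i, P i * (c * (g i * (if i = r then 1 else 0) / P r - a))
      = (if i = r then c * g i * P i / P r else 0) - c * a * P i := by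
    intro i
    split_ifs <;> ring
  rw [sum_congr rfl fun i _ => hsplit i, sum_sub_distrib, sum_ite_eq' univ r, ← mul_sum, hP]
  simp only [mem_univ, if_true]
  field_simp

section Exploration

variable {ι : Type*} [Fintype ι] [DecidableEq ι]

noncomputable def explorationDist (γ : ℝ) (yhat : ι) (r : ι) : ℝ :=
  (1 - γ) * (if r = yhat then 1 else 0) + γ / Fintype.card ι

lemma sum_explorationDist [Nonempty ι] (γ : ℝ) (yhat : ι) :
    ∑ r, explorationDist γ yhat r = 1 := by
  have hcard : (Fintype.card ι : ℝ) ≠ 0 := by positivity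
  simp only [explorationDist, sum_add_distrib, ← mul_sum, sum_ite_eq', mem_univ, if_true,
    sum_const, card_univ, nsmul_eq_mul]
  field_simp
  ring

lemma explorationDist_pos {γ : ℝ} (hγ0 : 0 < γ) (hγ1 : γ ≤ 1) (yhat r : ι) :
    0 < explorationDist γ yhat r := by
  have : Nonempty ι := ⟨r⟩
  have hexplore : 0 < γ / Fintype.card ι := by positivity
  have hexploit : 0 ≤ (1 - γ) * (if r = yhat then 1 else 0) := by
    apply mul_nonneg (by linarith)
    split_ifs <;> norm_num
  unfold explorationDist
  linarith

end Exploration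

theorem expected_update_matrix_eq_perceptron_update_general
    (K d : ℕ)
    (γ : ℝ) (hγ : γ ∈ Set.Ioo (0 : ℝ) 1)
    (yhat y : Fin K) (x : Fin d → ℝ)
    (ρ0 ρ1 : ℝ) (hsum : ρ0 + ρ1 < 1)
    (β : ℝ) (hβ : β = 1 - ρ0 - ρ1)
    (h0 : ℝ) (hh0 : h0 = -ρ0 / β)
    (h1 : ℝ) (hh1 : h1 = (1 - ρ0) / β)
    (P : Fin K → ℝ) (hP : ∀ r, P r = (1 - γ) * (if r = yhat then 1 else 0) + γ / K)
    (q : Fin K → ℝ) (hq : ∀ i, q i = if i = y then 1 - ρ1 else ρ0) :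
    ∀ (r : Fin K) (j : Fin d),
      ∑ i : Fin K,
          P i * (x j * ((q i * h1 + (1 - q i) * h0) * (if i = r then 1 else 0) / P r
            - (if yhat = r then 1 else 0)))
        = x j * ((if y = r then 1 else 0) - (if yhat = r then 1 else 0)) := by
  intro r j
  have : Nonempty (Fin K) := ⟨r⟩
  have hPdist : P = explorationDist γ yhat := funext fun i => by
    simp only [hP, explorationDist, Fintype.card_fin]
  have hβ0 : 1 - ρ0 - ρ1 ≠ 0 := by linarith
  have hunbiased : ∀ i, q i * h1 + (1 - q i) * h0 = if i = y then 1 else 0 := fun i => by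
    rw [hq, hh0, hh1, hβ]
    exact noisy_feedback_estimator_expectation hβ0 _
  simp_rw [hunbiased]
  subst hPdist
  rw [sum_mul_importance_weighted_sub (sum_explorationDist γ yhat)
    (explorationDist_pos hγ.1 hγ.2.le yhat r).ne']
  simp only [eq_comm]

theorem expected_update_matrix_eq_perceptron_update
    (K d : ℕ) (hK : 2 ≤ K) (hd : 1 ≤ d)
    (γ : ℝ) (hγ : γ ∈ Set.Ioo (0 : ℝ) 1)
    (yhat y : Fin K) (x : Fin d → ℝ)
    (ρ0 ρ1 : ℝ) (hρ0 : 0 ≤ ρ0) (hρ1 : 0 ≤ ρ1) (hsum : ρ0 + ρ1 < 1)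
    (β : ℝ) (hβ : β = 1 - ρ0 - ρ1)
    (h0 : ℝ) (hh0 : h0 = -ρ0 / β)
    (h1 : ℝ) (hh1 : h1 = (1 - ρ0) / β)
    (P : Fin K → ℝ) (hP : ∀ r, P r = (1 - γ) * (if r = yhat then 1 else 0) + γ / K)
    (q : Fin K → ℝ) (hq : ∀ i, q i = if i = y then 1 - ρ1 else ρ0) :
    ∀ (r : Fin K) (j : Fin d),
      ∑ i : Fin K,
          P i * (x j * ((q i * h1 + (1 - q i) * h0) * (if i = r then 1 else 0) / P r
            - (if yhat = r then 1 else 0)))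
        = x j * ((if y = r then 1 else 0) - (if yhat = r then 1 else 0)) :=
  expected_update_matrix_eq_perceptron_update_general K d γ hγ yhat y x ρ0 ρ1 hsum β hβ h0 hh0 h1
    hh1 P hP q hq
end

section
/- (Lemma 3.) Let K ≥ 2 and d ≥ 1 be natural numbers, γ ∈ (0, 1/2], ŷ, y ∈ Fin K, and x : Fin d → ℝ. Let ρ0, ρ1 ≥ 0 with ρ0 + ρ1 < 1, β := 1 − ρ0 − ρ1, h0 := −ρ0/β, h1 := (1−ρ0)/β, P(r) := (1−γ)·I[r = ŷ] + γ/K, and for i ∈ Fin K let q(i) := (1−ρ1) if i = y and q(i) := ρ0 otherwise. Define the expected squared Frobenius norm of the update matrix E := Σ_{i ∈ Fin K} P(i) · ( q(i)·N(i, h1) + (1 − q(i))·N(i, h0) ), where N(i, h) := Σ_{r ∈ Fin K} Σ_{j ∈ Fin d} ( x_j·( h·I[i = r]/P(r) − I[ŷ = r] ) )². Then E ≤ ‖x‖² · ( A1·I[y ≠ ŷ] + A2·I[y = ŷ] ), where A1 = 2K/γ + 2ρ0(1−ρ0)K/(βγ) + Kρ1/(β²γ) + ρ0(1−ρ0)K²/(β²γ²)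 and A2 = 2γ + ρ1/(β²(1−γ)) + ρ0(1−ρ0)K²/(β²γ), and ‖x‖² := Σ_{j} x_j². -/
/-!
The update matrix has rank one, so `N i h = ‖x‖² · ‖h eᵢ / P - e_ŷ‖²`, and averaging over the
sampled label and the noisy feedback gives the bias–variance form
`E / ‖x‖² = ∑ i, E[h² | i] / P i - 2 E[h | ŷ] + 1`.
The estimator is `h = (f_ρ - ρ0) / β`, an affine image of a Bernoulli(`q i`) variable, so
`E[h | i] = I[i = y]` and `E[h² | i] = I[i = y] + q i (1 - q i) / β²`.
Since `P ŷ ≥ 1 - γ ≥ 1/2` and `P i = γ / K` for `i ≠ ŷ`, what remains is an elementary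
inequality in each of the cases `y = ŷ` and `y ≠ ŷ`.
-/

open Finset

theorem sum_sum_mul_sq {ι κ : Type*} [Fintype ι] [Fintype κ] (x : κ → ℝ) (c : ι → ℝ) :
    ∑ r, ∑ j, (x j * c r) ^ 2 = (∑ j, x j ^ 2) * ∑ r, c r ^ 2 := by
  simp only [mul_pow, Finset.mul_sum, Finset.sum_mul]

theorem sum_sq_indicator_div_sub_indicator {ι : Type*} [Fintype ι] [DecidableEq ι]
    (P : ι → ℝ) (i a : ι) (h : ℝ) :
    ∑ r, (h * (if i = r then 1 else 0) / P r - (if a = r then 1 else 0)) ^ 2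
      = (h / P i) ^ 2 - 2 * (h / P i) * (if i = a then 1 else 0) + 1 := by
  have hr : ∀ r, (h * (if i = r then 1 else 0) / P r - (if a = r then 1 else 0)) ^ 2
      = (if i = r then (h / P i) ^ 2 - 2 * (h / P i) * (if i = a then 1 else 0) else 0)
        + (if a = r then 1 else 0) := by
    intro r
    rcases eq_or_ne i r with rfl | hir
    · rcases eq_or_ne a i with rfl | hai
      · simp only [if_true]; ring
      · simp only [if_true, if_neg hai, if_neg hai.symm]; ring
    · simp only [if_neg hir]; split_ifs <;> ring
  rw [Finset.sum_congr rfl fun r _ => hr r, Finset.sum_add_distrib, Finset.sum_ite_eq,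
    Finset.sum_ite_eq, if_pos (mem_univ _), if_pos (mem_univ _)]

theorem sum_expected_sq_norm_update_eq {ι κ : Type*} [Fintype ι] [DecidableEq ι] [Fintype κ]
    (x : κ → ℝ) (P q : ι → ℝ) (hP : ∀ i, P i ≠ 0) (a : ι) (u v : ℝ) :
    ∑ i, P i * (q i * ∑ r, ∑ j, (x j * (u * (if i = r then 1 else 0) / P r
          - (if a = r then 1 else 0))) ^ 2
        + (1 - q i) * ∑ r, ∑ j, (x j * (v * (if i = r then 1 else 0) / P r
          - (if a = r then 1 else 0))) ^ 2)
      = (∑ j, x j ^ 2) * (∑ i, (q i * u ^ 2 + (1 - q i) * v ^ 2) / P i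
          - 2 * (q a * u + (1 - q a) * v) + ∑ i, P i) := by
  simp only [sum_sum_mul_sq, sum_sq_indicator_div_sub_indicator]
  set S := ∑ j, x j ^ 2
  have hterm : ∀ i,
      P i * (q i * (S * ((u / P i) ^ 2 - 2 * (u / P i) * (if i = a then 1 else 0) + 1))
        + (1 - q i) * (S * ((v / P i) ^ 2 - 2 * (v / P i) * (if i = a then 1 else 0) + 1)))
      = S * ((q i * u ^ 2 + (1 - q i) * v ^ 2) / P i
          - (if i = a then 2 * (q a * u + (1 - q a) * v) else 0) + P i) := by
    intro i
    have := hP i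
    split_ifs with hia
    · subst hia; field_simp; ring
    · field_simp; ring
  rw [Finset.sum_congr rfl fun i _ => hterm i, ← Finset.mul_sum, Finset.sum_add_distrib,
    Finset.sum_sub_distrib, Finset.sum_ite_eq', if_pos (mem_univ _)]

theorem Fintype.sum_ite_eq_add_card_sub_one_mul {ι : Type*} [Fintype ι] [DecidableEq ι]
    (y : ι) (a b : ℝ) : ∑ i, (if i = y then a else b) = a + (Fintype.card ι - 1) * b := by
  have : Nonempty ι := ⟨y⟩
  rw [Finset.sum_ite, Finset.filter_eq', Finset.filter_ne']
  simp [Nat.cast_pred Fintype.card_pos]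

noncomputable def explorationProb (K : ℕ) (γ : ℝ) (a r : Fin K) : ℝ :=
  (1 - γ) * (if r = a then 1 else 0) + γ / K

section explorationProb

variable {K : ℕ} {γ : ℝ} (a : Fin K)

theorem explorationProb_self : explorationProb K γ a a = 1 - γ + γ / K := by
  simp [explorationProb]

theorem explorationProb_of_ne {r : Fin K} (hr : r ≠ a) : explorationProb K γ a r = γ / K := by
  simp [explorationProb, hr]

theorem sum_explorationProb : ∑ r, explorationProb K γ a r = 1 := by
  have : (K : ℝ) ≠ 0 := Nat.cast_ne_zero.2 a.pos.ne'
  simp [explorationProb, Finset.sum_add_distrib]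
  field_simp
  ring

theorem explorationProb_pos (hγ0 : 0 < γ) (hγ1 : γ ≤ 1) (r : Fin K) :
    0 < explorationProb K γ a r := by
  have : (0 : ℝ) < K := Nat.cast_pos.2 a.pos
  unfold explorationProb
  split_ifs <;> positivity

theorem sum_div_explorationProb (m : Fin K → ℝ) :
    ∑ i, m i / explorationProb K γ a i
      = K / γ * ∑ i, m i + (1 / explorationProb K γ a a - K / γ) * m a := by
  have hi : ∀ i, m i / explorationProb K γ a i
      = K / γ * m i + if i = a then (1 / explorationProb K γ a a - K / γ) * m a else 0 := by
    intro i
    split_ifs with hia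
    · subst hia; ring
    · rw [explorationProb_of_ne a hia, add_zero, div_div_eq_mul_div]; ring
  rw [Finset.sum_congr rfl fun i _ => hi i, Finset.sum_add_distrib, ← Finset.mul_sum,
    Finset.sum_ite_eq', if_pos (mem_univ _)]

end explorationProb

section NoisyFeedback

variable {ι : Type*} [DecidableEq ι] {ρ0 ρ1 β : ℝ} {q : ι → ℝ} {y : ι}

theorem noisy_estimate_mean (hβ : β = 1 - ρ0 - ρ1) (hβ0 : β ≠ 0)
    (hq : ∀ i, q i = if i = y then 1 - ρ1 else ρ0) (i : ι) :
    q i * ((1 - ρ0) / β) + (1 - q i) * (-ρ0 / β) = if i = y then 1 else 0 := by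
  rw [hq]
  split_ifs
  · field_simp; rw [hβ]; ring
  · ring

theorem noisy_estimate_second_moment (hβ : β = 1 - ρ0 - ρ1) (hβ0 : β ≠ 0)
    (hq : ∀ i, q i = if i = y then 1 - ρ1 else ρ0) (i : ι) :
    q i * ((1 - ρ0) / β) ^ 2 + (1 - q i) * (-ρ0 / β) ^ 2
      = if i = y then 1 + ρ1 * (1 - ρ1) / β ^ 2 else ρ0 * (1 - ρ0) / β ^ 2 := by
  rw [hq]
  split_ifs
  · field_simp; rw [hβ]; ring
  · ring

end NoisyFeedback

theorem expected_sq_norm_le_of_correct {K γ v0 v1 w1 : ℝ} (hγ0 : 0 < γ) (hγ2 : γ ≤ 1 / 2)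
    (hK : 0 < K) (hv0 : 0 ≤ v0) (hv1 : 0 ≤ v1) (hvw : v1 ≤ w1) :
    K / γ * (1 + v1 + (K - 1) * v0) + (1 / (1 - γ + γ / K) - K / γ) * (1 + v1) - 2 * 1 + 1
      ≤ 2 * γ + w1 / (1 - γ) + v0 * K ^ 2 / γ := by
  have hb : 1 - γ ≤ 1 - γ + γ / K := le_add_of_nonneg_right (by positivity)
  have h1 : (1 + v1) / (1 - γ + γ / K) ≤ (1 + w1) / (1 - γ) :=
    div_le_div₀ (by linarith) (by linarith) (by linarith) hb
  have h2 : 1 / (1 - γ) ≤ 1 + 2 * γ := by rw [div_le_iff₀ (by linarith)]; nlinarith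
  have h3 : (K - 1) * K / γ * v0 ≤ K ^ 2 / γ * v0 := by gcongr; nlinarith
  linear_combination h1 + h2 + h3

theorem expected_sq_norm_le_of_mistake {K γ v0 v1 w1 : ℝ} (hγ0 : 0 < γ) (hγ2 : γ ≤ 1 / 2)
    (hK : 1 ≤ K) (hv0 : 0 ≤ v0) (hvw : v1 ≤ w1) :
    K / γ * (1 + v1 + (K - 1) * v0) + (1 / (1 - γ + γ / K) - K / γ) * v0 - 2 * 0 + 1
      ≤ 2 * K / γ + K * w1 / γ + v0 * K ^ 2 / γ ^ 2 := by
  have h1 : 1 ≤ K / γ := by rw [le_div_iff₀ hγ0]; linarith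
  have h2 : K / γ * v1 ≤ K / γ * w1 := by gcongr
  have h3 : v0 * (1 / (1 - γ + γ / K)) ≤ v0 * 2 := by
    gcongr
    have : 0 ≤ γ / K := by positivity
    rw [div_le_iff₀ (by linarith)]
    linarith
  have h4 : v0 * (2 + (K - 2) * K / γ) ≤ v0 * (K ^ 2 / γ ^ 2) := by
    gcongr
    have hdiff : K ^ 2 / γ ^ 2 - (2 + (K - 2) * K / γ)
        = (K ^ 2 * (1 - γ) + 2 * γ * (K - γ)) / γ ^ 2 := by
      field_simp; ring
    have : 0 ≤ (K ^ 2 * (1 - γ) + 2 * γ * (K - γ)) / γ ^ 2 := by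
      apply div_nonneg _ (sq_nonneg γ)
      nlinarith [mul_nonneg (sq_nonneg K) (show 0 ≤ 1 - γ by linarith)]
    linarith
  linear_combination h1 + h2 + h3 + h4

theorem expected_squared_norm_update_matrix_bound_general
    (K d : ℕ)
    (γ : ℝ) (hγ : γ ∈ Set.Ioc (0 : ℝ) (1 / 2))
    (yhat y : Fin K) (x : Fin d → ℝ)
    (ρ0 ρ1 : ℝ) (hρ0 : 0 ≤ ρ0) (hρ1 : 0 ≤ ρ1) (hsum : ρ0 + ρ1 < 1)
    (β : ℝ) (hβ : β = 1 - ρ0 - ρ1)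
    (h0 : ℝ) (hh0 : h0 = -ρ0 / β)
    (h1 : ℝ) (hh1 : h1 = (1 - ρ0) / β)
    (P : Fin K → ℝ) (hP : ∀ r, P r = (1 - γ) * (if r = yhat then 1 else 0) + γ / K)
    (q : Fin K → ℝ) (hq : ∀ i, q i = if i = y then 1 - ρ1 else ρ0)
    (N : Fin K → ℝ → ℝ)
    (hN : ∀ i h, N i h = ∑ r : Fin K, ∑ j : Fin d,
        (x j * (h * (if i = r then 1 else 0) / P r - (if yhat = r then 1 else 0))) ^ 2)
    (E : ℝ) (hE : E = ∑ i : Fin K, P i * (q i * N i h1 + (1 - q i) * N i h0))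
    (A1 : ℝ) (hA1 : A1 = 2 * K / γ + 2 * ρ0 * (1 - ρ0) * K / (β * γ)
        + K * ρ1 / (β ^ 2 * γ) + ρ0 * (1 - ρ0) * K ^ 2 / (β ^ 2 * γ ^ 2))
    (A2 : ℝ) (hA2 : A2 = 2 * γ + ρ1 / (β ^ 2 * (1 - γ))
        + ρ0 * (1 - ρ0) * K ^ 2 / (β ^ 2 * γ)) :
    E ≤ (∑ j : Fin d, (x j) ^ 2) *
        (A1 * (if y ≠ yhat then 1 else 0) + A2 * (if y = yhat then 1 else 0)) := by
  obtain ⟨hγ0, hγ2⟩ := hγ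
  have hβ0 : 0 < β := by linarith
  have hρ0' : 0 ≤ 1 - ρ0 := by linarith
  have hρ1' : 0 ≤ 1 - ρ1 := by linarith
  have hK : (1 : ℝ) ≤ K := Nat.one_le_cast.2 yhat.pos
  have hv0 : 0 ≤ ρ0 * (1 - ρ0) / β ^ 2 := by positivity
  have hv1 : 0 ≤ ρ1 * (1 - ρ1) / β ^ 2 := by positivity
  have hvw : ρ1 * (1 - ρ1) / β ^ 2 ≤ ρ1 / β ^ 2 := by gcongr; nlinarith
  obtain rfl : P = explorationProb K γ yhat := funext hP
  subst hh0 hh1 hE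
  simp only [hN, sum_expected_sq_norm_update_eq x _ q
      (fun i => (explorationProb_pos yhat hγ0 (by linarith) i).ne'),
    noisy_estimate_second_moment hβ hβ0.ne' hq, noisy_estimate_mean hβ hβ0.ne' hq,
    sum_explorationProb, sum_div_explorationProb, Fintype.sum_ite_eq_add_card_sub_one_mul,
    Fintype.card_fin, explorationProb_self]
  refine mul_le_mul_of_nonneg_left ?_ (by positivity)
  rcases eq_or_ne yhat y with rfl | hy
  · simp only [if_true, ne_eq, not_true_eq_false, if_false, hA2, ← div_div]
    linear_combination
      expected_sq_norm_le_of_correct hγ0 hγ2 (zero_lt_one.trans_le hK) hv0 hv1 hvw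
  · have hslack : 0 ≤ 2 * ρ0 * (1 - ρ0) * K / (β * γ) := by positivity
    simp only [if_neg hy, if_pos hy.symm, if_neg hy.symm, hA1]
    linear_combination expected_sq_norm_le_of_mistake hγ0 hγ2 hK hv0 hvw + hslack

theorem expected_squared_norm_update_matrix_bound
    (K d : ℕ) (hK : 2 ≤ K) (hd : 1 ≤ d)
    (γ : ℝ) (hγ : γ ∈ Set.Ioc (0 : ℝ) (1 / 2))
    (yhat y : Fin K) (x : Fin d → ℝ)
    (ρ0 ρ1 : ℝ) (hρ0 : 0 ≤ ρ0) (hρ1 : 0 ≤ ρ1) (hsum : ρ0 + ρ1 < 1)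
    (β : ℝ) (hβ : β = 1 - ρ0 - ρ1)
    (h0 : ℝ) (hh0 : h0 = -ρ0 / β)
    (h1 : ℝ) (hh1 : h1 = (1 - ρ0) / β)
    (P : Fin K → ℝ) (hP : ∀ r, P r = (1 - γ) * (if r = yhat then 1 else 0) + γ / K)
    (q : Fin K → ℝ) (hq : ∀ i, q i = if i = y then 1 - ρ1 else ρ0)
    (N : Fin K → ℝ → ℝ)
    (hN : ∀ i h, N i h = ∑ r : Fin K, ∑ j : Fin d,
        (x j * (h * (if i = r then 1 else 0) / P r - (if yhat = r then 1 else 0))) ^ 2)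
    (E : ℝ) (hE : E = ∑ i : Fin K, P i * (q i * N i h1 + (1 - q i) * N i h0))
    (A1 : ℝ) (hA1 : A1 = 2 * K / γ + 2 * ρ0 * (1 - ρ0) * K / (β * γ)
        + K * ρ1 / (β ^ 2 * γ) + ρ0 * (1 - ρ0) * K ^ 2 / (β ^ 2 * γ ^ 2))
    (A2 : ℝ) (hA2 : A2 = 2 * γ + ρ1 / (β ^ 2 * (1 - γ))
        + ρ0 * (1 - ρ0) * K ^ 2 / (β ^ 2 * γ)) :
    E ≤ (∑ j : Fin d, (x j) ^ 2) *
        (A1 * (if y ≠ yhat then 1 else 0) + A2 * (if y = yhat then 1 else 0)) :=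
  expected_squared_norm_update_matrix_bound_general K d γ hγ yhat y x ρ0 ρ1 hρ0 hρ1 hsum β hβ h0 hh0
    h1 hh1 P hP q hq N hN E hE A1 hA1 A2 hA2
end
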